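/- arXiv:1603.08759 — 2 statements merged into one kernel-verified Lean document; each statement's English description precedes it below -/
import Mathlib

section
/- For every n ≥ 1 and every integer k with 0 ≤ k ≤ n, define g_n(k) = -log( C(n,k) (k/n)^k ((n-k)/n)^{n-k} ), with the convention 0 log 0 = 0. Then g_n(k) ≤ g(k), where g(k) = log(k!) - k log(k) + k. -/
/-- `g k = log(k! / (k^k e^{-k}))`. -/
noncomputable def g (k : ℕ) : ℝ :=
  Real.log (Nat.factorial k) - k * Real.log k + k

/-- `gBin n k = - log( C(n,k) (k/n)^k ((n-k)/n)^{n-k} )`, minus the log of the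
probability that a `Binomial(n, k/n)` random variable equals `k`
(conventions `0^0 = 1`, `0 log 0 = 0`). -/
noncomputable def gBin (n k : ℕ) : ℝ :=
  - Real.log ((n.choose k : ℝ) * ((k : ℝ) / n) ^ k * (((n - k : ℕ) : ℝ) / n) ^ (n - k))

/-!
Cancelling the factorials in `C(n,k) = n! / (k! (n-k)!)` against the powers gives the exact identity
`g_n(k) = g(k) + g(n-k) - g(n)`, so the claim reduces to `g(n-k) ≤ g(n)`. And `g` is monotone:
`g(m+1) - g(m) = 1 - m log(1 + 1/m) ≥ 0` because `log(1 + x) ≤ x`.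
-/

open Real
open scoped Nat

lemma natCast_div_pow_self_pos {k n : ℕ} (hkn : k ≤ n) : 0 < ((k : ℝ) / n) ^ k := by
  rcases k.eq_zero_or_pos with rfl | hk
  · simp
  · have : 0 < n := hk.trans_le hkn
    positivity

lemma log_natCast_div_pow_self {k n : ℕ} (hkn : k ≤ n) :
    log (((k : ℝ) / n) ^ k) = k * log k - k * log n := by
  rw [log_pow]
  rcases k.eq_zero_or_pos with rfl | hk
  · simp
  · have : 0 < n := hk.trans_le hkn
    rw [log_div (by positivity) (by positivity)]
    ring

lemma log_choose {k n : ℕ} (hkn : k ≤ n) :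
    log (n.choose k) = log n ! - log k ! - log (n - k)! := by
  rw [Nat.cast_choose ℝ hkn, log_div (by positivity) (by positivity),
    log_mul (by positivity) (by positivity)]
  ring

lemma gBin_eq (n k : ℕ) (hk : k ≤ n) : gBin n k = g k + g (n - k) - g n := by
  have hnk : n - k ≤ n := Nat.sub_le n k
  have hchoose : (0 : ℝ) < n.choose k := by exact_mod_cast Nat.choose_pos hk
  have hpow := natCast_div_pow_self_pos hk
  have hpow' := natCast_div_pow_self_pos hnk
  rw [gBin, log_mul (by positivity) hpow'.ne', log_mul hchoose.ne' hpow.ne', log_choose hk,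
    log_natCast_div_pow_self hk, log_natCast_div_pow_self hnk, g, g, g, Nat.cast_sub hk]
  ring

lemma g_le_g_succ (m : ℕ) : g m ≤ g (m + 1) := by
  rcases m.eq_zero_or_pos with rfl | hm_nat
  · simp [g]
  have hm : (0 : ℝ) < m := by exact_mod_cast hm_nat
  have hlog : m * (log (m + 1) - log m) ≤ 1 := by
    have := log_le_sub_one_of_pos (x := (m + 1) / m) (by positivity)
    rw [log_div (by positivity) hm.ne'] at this
    calc m * (log (m + 1) - log m) ≤ m * ((m + 1) / m - 1) := by gcongr
      _ = 1 := by field_simp; ring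
  simp only [g, Nat.factorial_succ, Nat.cast_mul, Nat.cast_succ]
  rw [log_mul (by positivity) (by positivity)]
  linarith

/-- `g_n(k) ≤ g(k)` for all `1 ≤ n` and `0 ≤ k ≤ n`. -/
theorem gBin_le_g : ∀ n k : ℕ, 1 ≤ n → k ≤ n → gBin n k ≤ g k := by
  intro n k _ hk
  linarith [gBin_eq n k hk, monotone_nat_of_le_succ g_le_g_succ (Nat.sub_le n k)]
end

section
/- Bi-partite graphs with a constrained total number of links have equivalent ensembles: with K = n₁n₂, L = λK an integer, λ ∈ (0,1), the relative entropy -log[ C(n₁n₂, λn₁n₂) λ^{λn₁n₂} (1-λ)^{(1-λ)n₁n₂} ] is o(n₁+n₂) as n₁, n₂ → ∞. -/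
/-!
The quantity inside the logarithm is the binomial probability `P(Bin(K, λ) = L)` with
`K = n₁ n₂`, evaluated at the mode `L = λ K`. A mode is the largest of `K + 1` terms that sum
to `1`, so it is at least `1 / (K + 1)`. Hence the relative entropy lies in
`[0, log (K + 1)] ⊆ [0, 2 log (n₁ + n₂)]`, which is `o(n₁ + n₂)`.
-/

open Filter Real Finset Topology

noncomputable def binomTerm (K : ℕ) (p : ℝ) (i : ℕ) : ℝ :=
  K.choose i * p ^ i * (1 - p) ^ (K - i)

namespace binomTerm

variable {K : ℕ} {p : ℝ}

lemma nonneg (hp0 : 0 ≤ p) (hp1 : p ≤ 1) (i : ℕ) : 0 ≤ binomTerm K p i := by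
  unfold binomTerm
  have : 0 ≤ 1 - p := by linarith
  positivity

lemma sum_eq_one (K : ℕ) (p : ℝ) : ∑ i ∈ range (K + 1), binomTerm K p i = 1 := by
  have h := (add_pow p (1 - p) K).symm
  rw [add_sub_cancel, one_pow] at h
  rw [← h]
  exact sum_congr rfl fun i _ => by unfold binomTerm; ring

lemma le_one (hp0 : 0 ≤ p) (hp1 : p ≤ 1) (i : ℕ) : binomTerm K p i ≤ 1 := by
  rcases le_or_gt i K with hi | hi
  · rw [← sum_eq_one K p]
    exact single_le_sum (fun j _ => nonneg hp0 hp1 j) (mem_range.mpr (Nat.lt_succ_of_le hi))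
  · simp [binomTerm, Nat.choose_eq_zero_of_lt hi]

lemma succ_mul_eq (p : ℝ) {i : ℕ} (hi : i < K) :
    binomTerm K p (i + 1) * ((i + 1) * (1 - p)) = binomTerm K p i * ((K - i) * p) := by
  have hchoose : (K.choose (i + 1) : ℝ) * (i + 1) = K.choose i * (K - i) := by
    have h := congrArg (Nat.cast (R := ℝ)) (Nat.choose_succ_right_eq K i)
    push_cast [Nat.cast_sub hi.le] at h
    exact h
  simp only [binomTerm, show K - i = (K - (i + 1)) + 1 by omega, pow_succ]
  linear_combination (p ^ i * p * (1 - p) ^ (K - (i + 1)) * (1 - p)) * hchoose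

lemma le_succ (hp0 : 0 ≤ p) (hp1 : p < 1) {i : ℕ} (hi : i < K)
    (h : (i + 1 : ℝ) ≤ (K + 1) * p) :
    binomTerm K p i ≤ binomTerm K p (i + 1) := by
  have hpos : (0 : ℝ) < (i + 1) * (1 - p) := by nlinarith
  refine le_of_mul_le_mul_right ?_ hpos
  rw [succ_mul_eq p hi]
  exact mul_le_mul_of_nonneg_left (by nlinarith) (nonneg hp0 hp1.le i)

lemma succ_le (hp0 : 0 ≤ p) (hp1 : p < 1) {i : ℕ} (hi : i < K)
    (h : (K + 1) * p ≤ i + 1) :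
    binomTerm K p (i + 1) ≤ binomTerm K p i := by
  have hpos : (0 : ℝ) < (i + 1) * (1 - p) := by nlinarith
  refine le_of_mul_le_mul_right ?_ hpos
  rw [succ_mul_eq p hi]
  exact mul_le_mul_of_nonneg_left (by nlinarith) (nonneg hp0 hp1.le i)

-- The hypotheses `hl₁`, `hl₂` say that `l` is a mode of the binomial distribution `Bin(K, p)`.
lemma le_mode {l : ℕ} (hp0 : 0 ≤ p) (hp1 : p < 1) (hl₁ : (K + 1) * p - 1 ≤ l)
    (hl₂ : l ≤ (K + 1) * p) {i : ℕ} (hi : i ≤ K) : binomTerm K p i ≤ binomTerm K p l := by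
  have hlK : l ≤ K := by
    have : (l : ℝ) < K + 1 := by nlinarith
    exact Nat.lt_succ_iff.mp (by exact_mod_cast this)
  rcases le_total i l with hil | hli
  · refine monotoneOn_of_le_add_one Set.ordConnected_Iic (fun a _ _ ha => ?_) hil le_rfl hil
    have hal : a + 1 ≤ l := ha
    have hal' : ((a + 1 : ℕ) : ℝ) ≤ l := Nat.cast_le.mpr hal
    exact le_succ hp0 hp1 (by omega) (by push_cast at hal'; linarith)
  · refine antitoneOn_of_add_one_le Set.ordConnected_Icc (fun a _ ha ha' => ?_)
      ⟨le_rfl, hlK⟩ ⟨hli, hi⟩ hli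
    have hla : (l : ℝ) ≤ a := Nat.cast_le.mpr ha.1
    exact succ_le hp0 hp1 ha'.2 (by linarith)

lemma inv_succ_le_mode {l : ℕ} (hp0 : 0 ≤ p) (hp1 : p < 1) (hl₁ : (K + 1) * p - 1 ≤ l)
    (hl₂ : l ≤ (K + 1) * p) : ((K : ℝ) + 1)⁻¹ ≤ binomTerm K p l := by
  have h := sum_le_card_nsmul (range (K + 1)) (binomTerm K p) (binomTerm K p l)
    fun i hi => le_mode hp0 hp1 hl₁ hl₂ (Nat.lt_succ_iff.mp (mem_range.mp hi))
  rw [sum_eq_one, card_range, nsmul_eq_mul] at h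
  rw [inv_le_iff_one_le_mul₀' (by positivity)]
  exact_mod_cast h

lemma neg_log_mode_le {l : ℕ} (hp0 : 0 ≤ p) (hp1 : p < 1) (hl₁ : (K + 1) * p - 1 ≤ l)
    (hl₂ : l ≤ (K + 1) * p) : -log (binomTerm K p l) ≤ log (K + 1) := by
  rw [neg_le, ← log_inv]
  exact log_le_log (by positivity) (inv_succ_le_mode hp0 hp1 hl₁ hl₂)

end binomTerm

lemma log_mul_add_one_le_two_mul_log_add (a b : ℕ) (h : 1 ≤ a + b) :
    log ((a * b : ℕ) + 1 : ℝ) ≤ 2 * log (a + b : ℝ) := by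
  have hle : a * b + 1 ≤ (a + b) ^ 2 := by nlinarith [Nat.le_mul_self a, Nat.le_mul_self b]
  rw [← Nat.cast_ofNat, ← log_pow]
  exact log_le_log (by positivity) (by exact_mod_cast hle)

theorem bipartite_links_equivalence_general (lam : ℝ) (hlam0 : 0 < lam) (hlam1 : lam < 1)
    (n₁ n₂ : ℕ → ℕ) (hn₁ : Filter.Tendsto n₁ Filter.atTop Filter.atTop)
    (L : ℕ → ℕ) (hL : ∀ j : ℕ, (L j : ℝ) = lam * (n₁ j * n₂ j : ℕ)) :
    Filter.Tendsto
      (fun j : ℕ =>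
        (-Real.log (((n₁ j * n₂ j).choose (L j) : ℝ) * lam ^ (L j) *
            (1 - lam) ^ (n₁ j * n₂ j - L j))) / ((n₁ j : ℝ) + n₂ j))
      Filter.atTop (nhds 0) := by
  have hN : Tendsto (fun j => ((n₁ j : ℝ) + n₂ j)) atTop atTop :=
    tendsto_atTop_add_right_of_le _ 0 (tendsto_natCast_atTop_atTop.comp hn₁) fun _ => by
      positivity
  have hbound : Tendsto (fun j => 2 * (log ((n₁ j : ℝ) + n₂ j) / ((n₁ j : ℝ) + n₂ j)))
      atTop (𝓝 0) := by
    simpa using ((tendsto_pow_log_div_mul_add_atTop 1 0 1 one_ne_zero).comp hN).const_mul 2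
  refine squeeze_zero' (Eventually.of_forall fun j => div_nonneg ?_ (by positivity)) ?_ hbound
  · exact neg_nonneg.mpr
      (log_nonpos (binomTerm.nonneg hlam0.le hlam1.le _) (binomTerm.le_one hlam0.le hlam1.le _))
  filter_upwards [hN.eventually_ge_atTop 1] with j hj
  have hmode₁ : ((n₁ j * n₂ j : ℕ) + 1) * lam - 1 ≤ L j := by rw [hL j]; linarith
  have hmode₂ : (L j : ℝ) ≤ ((n₁ j * n₂ j : ℕ) + 1) * lam := by rw [hL j]; linarith
  rw [mul_div_assoc', div_le_div_iff_of_pos_right (by linarith)]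
  exact (binomTerm.neg_log_mode_le hlam0.le hlam1 hmode₁ hmode₂).trans
    (log_mul_add_one_le_two_mul_log_add _ _ (by exact_mod_cast hj))

/-- bi-partite graphs with a constrained total number of links
`L = λ n₁ n₂` have equivalent ensembles: the relative entropy
`- log[ C(n₁n₂, L) λ^L (1-λ)^{n₁n₂ - L} ]` is `o(n₁ + n₂)` as `n₁, n₂ → ∞`. -/
theorem bipartite_links_equivalence (lam : ℝ) (hlam0 : 0 < lam) (hlam1 : lam < 1)
    (n₁ n₂ : ℕ → ℕ) (hn₁ : Filter.Tendsto n₁ Filter.atTop Filter.atTop)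
    (hn₂ : Filter.Tendsto n₂ Filter.atTop Filter.atTop)
    (L : ℕ → ℕ) (hL : ∀ j : ℕ, (L j : ℝ) = lam * (n₁ j * n₂ j : ℕ)) :
    Filter.Tendsto
      (fun j : ℕ =>
        (-Real.log (((n₁ j * n₂ j).choose (L j) : ℝ) * lam ^ (L j) *
            (1 - lam) ^ (n₁ j * n₂ j - L j))) / ((n₁ j : ℝ) + n₂ j))
      Filter.atTop (nhds 0) :=
  bipartite_links_equivalence_general lam hlam0 hlam1 n₁ n₂ hn₁ L hL
end
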